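/- arXiv:2304.07399 — 5 statements merged into one kernel-verified Lean document; each statement's English description precedes it below -/
import Mathlib

section
/- The set of positive integers represented by t1^2 + t2^2 has natural density 0. -/
/-!
Every prime `p ≡ 3 (mod 4)` divides a sum of two squares to an even power, so a sum of two squares
is never divisible by `p` exactly once. For a finite set `F` of such primes this confines the sums
of two squares to residues modulo `∏ p²` that avoid, for each `p ∈ F`, the `p - 1` classes `p k`
with `0 < k < p`; by the Chinese remainder theorem these residues have relative density
`∏ (1 - (p - 1) / p²) ≤ exp (-∑ 1 / (2p))`. This can be made arbitrarily small because, by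
Dirichlet's theorem in its analytic form, `∑ 1 / p` diverges over the primes `p ≡ 3 (mod 4)`.
-/

open Filter

/-- The natural density of a set of positive integers: limit of #(S ∩ [1,N])/N. -/
def natDensity (S : Set ℕ) (δ : ℝ) : Prop :=
  Tendsto (fun N : ℕ => (Nat.card {n : ℕ // n ∈ S ∧ 1 ≤ n ∧ n ≤ N} : ℝ) / N)
    atTop (nhds δ)

open Topology Finset Function ArithmeticFunction vonMangoldt

lemma sub_one_mul_log_div_rpow_le_inv {x y : ℝ} (hx : 1 < x) (hy : 0 < y) :
    (x - 1) * (Real.log y / y ^ x) ≤ y⁻¹ := by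
  have hlog : (x - 1) * Real.log y ≤ y ^ (x - 1) := by
    have := Real.log_le_rpow_div hy.le (sub_pos.mpr hx)
    rwa [le_div_iff₀ (sub_pos.mpr hx), mul_comm] at this
  calc (x - 1) * (Real.log y / y ^ x) = (x - 1) * Real.log y / y ^ x := by ring
    _ ≤ y ^ (x - 1) / y ^ x := by gcongr
    _ = y⁻¹ := by
      rw [Real.rpow_sub hy, Real.rpow_one, div_right_comm, div_self (by positivity), one_div]

section PrimesInResidueClass

variable {q : ℕ} {a : ZMod q}

lemma sub_one_mul_residueClass_div_rpow_le {x : ℝ} (hx : x ∈ Set.Ioc 1 2) (n : ℕ) :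
    (x - 1) * (residueClass a n / (n : ℝ) ^ x) ≤
      {p : ℕ | p.Prime ∧ (p : ZMod q) = a}.indicator (fun n => (n : ℝ)⁻¹) n +
        (if n.Prime then 0 else residueClass a n) / n := by
  rcases n.eq_zero_or_pos with rfl | hn
  · simp [Nat.not_prime_zero]
  have hn' : (0 : ℝ) < n := Nat.cast_pos.mpr hn
  by_cases hp : n.Prime
  · by_cases ha : (n : ZMod q) = a
    · simpa [residueClass, ha, hp, vonMangoldt_apply_prime hp]
        using sub_one_mul_log_div_rpow_le_inv hx.1 hn'
    · simp [residueClass, ha, hp]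
  · rw [Set.indicator_of_notMem (fun h => hp h.1), if_neg hp, zero_add]
    calc (x - 1) * (residueClass a n / (n : ℝ) ^ x) ≤ 1 * (residueClass a n / n) := by
          have := residueClass_nonneg a n
          gcongr
          · linarith [hx.2]
          · exact Real.self_le_rpow_of_one_le (Nat.one_le_cast.mpr hn) hx.1.le
      _ = residueClass a n / n := one_mul _

/- If `∑ 1 / p` converged over the primes `p ≡ a`, dominated convergence would give
`(x - 1) ∑ Λ_a(n) / n ^ x → 0` as `x → 1⁺`, whereas this L-series has a pole at `1`
with residue `1 / φ(q)`. -/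
lemma not_summable_inv_on_primes_eq_mod [NeZero q] (ha : IsUnit a) :
    ¬ Summable ({p : ℕ | p.Prime ∧ (p : ZMod q) = a}.indicator fun n => (n : ℝ)⁻¹) := by
  intro hT
  set f : ℝ → ℕ → ℝ := fun x n => (x - 1) * (residueClass a n / (n : ℝ) ^ x)
  have hIoc : Set.Ioc (1 : ℝ) 2 ∈ 𝓝[>] 1 := Ioc_mem_nhdsGT one_lt_two
  have hvanish : Tendsto (fun x => ∑' n, f x n) (𝓝[>] 1) (𝓝 0) := by
    have hlim (n : ℕ) : Tendsto (f · n) (𝓝[>] 1) (𝓝 0) := by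
      rcases n.eq_zero_or_pos with rfl | hn
      · simp [f]
      refine tendsto_nhdsWithin_of_tendsto_nhds ?_
      have : ContinuousAt (f · n) 1 := by
        have := Real.continuousAt_const_rpow' (a := (n : ℝ)) one_ne_zero
        fun_prop (disch := simp [hn.ne'])
      simpa [f] using this.tendsto
    simpa using tendsto_tsum_of_dominated_convergence
      (hT.add (summable_residueClass_non_primes_div a)) hlim <| by
        filter_upwards [hIoc] with x hx n
        rw [Real.norm_of_nonneg (by have := residueClass_nonneg a n; have := hx.1; positivity)]
        exact sub_one_mul_residueClass_div_rpow_le hx n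
  obtain ⟨C, hC⟩ := LSeries_residueClass_lower_bound ha
  have hlower : ∀ᶠ x in 𝓝[>] 1, (q.totient : ℝ)⁻¹ - (x - 1) * C ≤ ∑' n, f x n := by
    filter_upwards [hIoc] with x hx
    rw [tsum_mul_left]
    have := (div_le_iff₀' (sub_pos.mpr hx.1)).mp (sub_le_iff_le_add.mp (hC hx))
    linarith
  have hconst : Tendsto (fun x : ℝ => (q.totient : ℝ)⁻¹ - (x - 1) * C) (𝓝[>] 1)
      (𝓝 (q.totient : ℝ)⁻¹) :=
    tendsto_nhdsWithin_of_tendsto_nhds <| Continuous.tendsto' (by fun_prop) 1 _ (by simp)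
  have := le_of_tendsto_of_tendsto hconst hvanish hlower
  have : 0 < (q.totient : ℝ)⁻¹ := inv_pos.mpr (mod_cast q.totient.pos_of_neZero)
  linarith

lemma exists_finset_primes_eq_mod_le_sum_inv [NeZero q] (ha : IsUnit a) (L : ℝ) :
    ∃ F : Finset ℕ, (∀ p ∈ F, p.Prime ∧ (p : ZMod q) = a) ∧ L ≤ ∑ p ∈ F, (p : ℝ)⁻¹ := by
  by_contra! h
  refine not_summable_inv_on_primes_eq_mod ha <|
    summable_of_sum_le (c := L) (fun n => Set.indicator_apply_nonneg fun _ => by positivity)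
      fun u => ?_
  classical
  rw [sum_indicator_eq_sum_filter]
  exact (h _ fun p hp => (mem_filter.mp hp).2).le

end PrimesInResidueClass

lemma card_filter_forall_mod_le_prod {ι : Type*} [DecidableEq ι] (F : Finset ι) (m : ι → ℕ)
    (hm : (F : Set ι).Pairwise (Nat.Coprime on m)) (P : ι → ℕ → Prop)
    [∀ i, DecidablePred (P i)] :
    #{r ∈ range (∏ i ∈ F, m i) | ∀ i ∈ F, P i (r % m i)} ≤
      ∏ i ∈ F, #{s ∈ range (m i) | P i s} := by
  rw [← card_pi]
  refine card_le_card_of_injOn (fun r i _ => r % m i) (fun r hr => ?_) fun r hr r' hr' h => ?_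
  · simp only [coe_filter, mem_range, Set.mem_ofPred_eq] at hr
    have hm0 : ∏ i ∈ F, m i ≠ 0 := (Nat.zero_le r).trans_lt hr.1 |>.ne'
    simp only [mem_coe, Finset.mem_pi, mem_filter, mem_range]
    exact fun i hi => ⟨Nat.mod_lt _ (Nat.pos_of_ne_zero (prod_ne_zero_iff.mp hm0 i hi)), hr.2 i hi⟩
  · simp only [coe_filter, mem_range, Set.mem_ofPred_eq] at hr hr'
    have hdvd : ((∏ i ∈ F, m i : ℕ) : ℤ) ∣ (r' : ℤ) - r := by
      push_cast
      refine Finset.prod_dvd_of_coprime (fun i hi j hj hij => Nat.isCoprime_iff_coprime.mpr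
        (hm hi hj hij)) fun i hi => ?_
      exact Nat.modEq_iff_dvd.mp (congrFun (congrFun h i) hi)
    exact (Nat.modEq_iff_dvd.mpr hdvd).eq_of_lt_of_lt hr.1 hr'.1

lemma sub_one_le_card_filter_dvd_not_sq_dvd {p : ℕ} (hp : 0 < p) :
    p - 1 ≤ #{s ∈ range (p ^ 2) | p ∣ s ∧ ¬p ^ 2 ∣ s} := by
  rw [← Nat.card_Ico 1 p]
  refine card_le_card_of_injOn (p * ·) (fun k hk => ?_) fun k _ k' _ h =>
    Nat.eq_of_mul_eq_mul_left hp h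
  simp only [coe_Ico, Set.mem_Ico] at hk
  simp only [coe_filter, mem_range, Set.mem_ofPred_eq, sq]
  refine ⟨Nat.mul_lt_mul_of_pos_left hk.2 hp, dvd_mul_right p k, fun h => ?_⟩
  have := Nat.le_of_dvd (by omega) (Nat.dvd_of_mul_dvd_mul_left hp h)
  omega

lemma one_sub_div_sq_le_exp {p : ℝ} (hp : 2 ≤ p) :
    1 - (p - 1) / p ^ 2 ≤ Real.exp (-(p⁻¹ / 2)) := by
  refine le_trans ?_ (Real.one_sub_le_exp_neg _)
  have : p⁻¹ / 2 ≤ (p - 1) / p ^ 2 := by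
    rw [div_le_div_iff₀ (by norm_num) (by positivity)]
    field_simp
    nlinarith
  linarith

lemma card_filter_not_dvd_and_not_sq_dvd_div_le_exp {p : ℕ} (hp : p.Prime) :
    (#{s ∈ range (p ^ 2) | ¬(p ∣ s ∧ ¬p ^ 2 ∣ s)} : ℝ) / (p : ℝ) ^ 2 ≤
      Real.exp (-((p : ℝ)⁻¹ / 2)) := by
  have hsplit := card_filter_add_card_filter_not (s := range (p ^ 2))
    (p := fun s => p ∣ s ∧ ¬p ^ 2 ∣ s)
  have hbad := sub_one_le_card_filter_dvd_not_sq_dvd hp.pos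
  have hcard : (#{s ∈ range (p ^ 2) | ¬(p ∣ s ∧ ¬p ^ 2 ∣ s)} : ℝ) ≤ (p : ℝ) ^ 2 - (p - 1) := by
    have : #{s ∈ range (p ^ 2) | ¬(p ∣ s ∧ ¬p ^ 2 ∣ s)} + (p - 1) ≤ p ^ 2 := by
      rw [card_range] at hsplit; omega
    have := (Nat.cast_le (α := ℝ)).mpr this
    rw [Nat.cast_add, Nat.cast_sub hp.one_le] at this
    push_cast at this
    linarith
  calc _ ≤ ((p : ℝ) ^ 2 - (p - 1)) / (p : ℝ) ^ 2 := by gcongr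
    _ = 1 - (p - 1) / (p : ℝ) ^ 2 := by
        rw [sub_div, div_self (pow_pos (Nat.cast_pos.mpr hp.pos) 2).ne']
    _ ≤ _ := one_sub_div_sq_le_exp (mod_cast hp.two_le)

lemma card_filter_forall_not_dvd_and_not_sq_dvd_div_le_exp (F : Finset ℕ)
    (hF : ∀ p ∈ F, p.Prime) :
    (#{r ∈ range (∏ p ∈ F, p ^ 2) | ∀ p ∈ F, ¬(p ∣ r % p ^ 2 ∧ ¬p ^ 2 ∣ r % p ^ 2)} : ℝ) /
        ↑(∏ p ∈ F, p ^ 2) ≤ Real.exp (-(∑ p ∈ F, (p : ℝ)⁻¹) / 2) := by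
  have hcop : (F : Set ℕ).Pairwise (Nat.Coprime on (· ^ 2)) := fun p hp q hq hpq =>
    Nat.Coprime.pow 2 2 <| (Nat.coprime_primes (hF p hp) (hF q hq)).mpr hpq
  calc _ ≤ (∏ p ∈ F, #{s ∈ range (p ^ 2) | ¬(p ∣ s ∧ ¬p ^ 2 ∣ s)} : ℝ) /
          ↑(∏ p ∈ F, p ^ 2) := by
        gcongr
        exact_mod_cast card_filter_forall_mod_le_prod F (· ^ 2) hcop
          (fun p s => ¬(p ∣ s ∧ ¬p ^ 2 ∣ s))
    _ = ∏ p ∈ F, (#{s ∈ range (p ^ 2) | ¬(p ∣ s ∧ ¬p ^ 2 ∣ s)} : ℝ) / (p : ℝ) ^ 2 := by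
        push_cast; rw [prod_div_distrib]
    _ ≤ ∏ p ∈ F, Real.exp (-((p : ℝ)⁻¹ / 2)) :=
        prod_le_prod (fun _ _ => by positivity)
          fun p hp => card_filter_not_dvd_and_not_sq_dvd_div_le_exp (hF p hp)
    _ = Real.exp (-(∑ p ∈ F, (p : ℝ)⁻¹) / 2) := by
        rw [← Real.exp_sum, neg_div, sum_div, ← sum_neg_distrib]

lemma card_filter_mod_mem_le (N M : ℕ) (R : Finset ℕ) :
    #{n ∈ Icc 1 N | n % M ∈ R} ≤ (N / M + 1) * #R := by
  rw [← card_range (N / M + 1), ← card_product]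
  refine card_le_card_of_injOn (fun n => (n / M, n % M)) (fun n hn => ?_) fun n _ n' _ h => ?_
  · simp only [coe_filter, mem_Icc, Set.mem_ofPred_eq] at hn
    simp only [coe_product, coe_range, Set.mem_prod, Set.mem_Iio, mem_coe]
    exact ⟨Nat.lt_succ_of_le (Nat.div_le_div_right hn.1.2), hn.2⟩
  · rw [Prod.mk.injEq] at h
    rw [← Nat.div_add_mod n M, ← Nat.div_add_mod n' M, h.1, h.2]

lemma natDensity_zero_of_forall_exists_mod_mem {S : Set ℕ}
    (h : ∀ ε > 0, ∃ M : ℕ, ∃ R : Finset ℕ, (#R : ℝ) / M < ε ∧ ∀ n ∈ S, n % M ∈ R) :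
    natDensity S 0 := by
  refine tendsto_order.2 ⟨fun b hb => Eventually.of_forall fun N => hb.trans_le (by positivity),
    fun ε hε => ?_⟩
  obtain ⟨M, R, hR, hS⟩ := h ε hε
  have hcount (N : ℕ) :
      (Nat.card {n : ℕ // n ∈ S ∧ 1 ≤ n ∧ n ≤ N} : ℝ) ≤ (N / M + 1) * #R := by
    have hsub : {n : ℕ | n ∈ S ∧ 1 ≤ n ∧ n ≤ N} ⊆ ↑({n ∈ Icc 1 N | n % M ∈ R} : Finset ℕ) :=
      fun n hn => by simpa [hn.2] using hS n hn.1
    calc (Nat.card {n : ℕ // n ∈ S ∧ 1 ≤ n ∧ n ≤ N} : ℝ)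
        ≤ #{n ∈ Icc 1 N | n % M ∈ R} := by
          rw [← Set.ncard_coe_finset]
          exact_mod_cast Set.ncard_le_ncard hsub (finite_toSet _)
      _ ≤ ((N / M + 1) * #R : ℕ) := by exact_mod_cast card_filter_mod_mem_le N M R
      _ ≤ (N / M + 1) * #R := by push_cast; gcongr; exact Nat.cast_div_le
  have hlim : Tendsto (fun N : ℕ => (#R : ℝ) / M + #R / N) atTop (𝓝 ((#R : ℝ) / M)) := by
    simpa using tendsto_const_nhds.add (tendsto_const_div_atTop_nhds_zero_nat (#R : ℝ))
  filter_upwards [hlim.eventually (gt_mem_nhds hR), eventually_gt_atTop 0] with N hN hN0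
  calc (Nat.card {n : ℕ // n ∈ S ∧ 1 ≤ n ∧ n ≤ N} : ℝ) / N ≤ (N / M + 1) * #R / N := by
        gcongr; exact hcount N
    _ = (#R : ℝ) / M + #R / N := by field_simp
    _ < ε := hN

lemma Nat.sq_dvd_of_dvd_of_eq_sq_add_sq {n x y p : ℕ} (h : n = x ^ 2 + y ^ 2) (hp : p.Prime)
    (hp4 : p % 4 = 3) (hpn : p ∣ n) : p ^ 2 ∣ n := by
  by_contra hsq
  have hn : n ≠ 0 := by rintro rfl; exact hsq (dvd_zero _)
  have : Fact p.Prime := ⟨hp⟩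
  have hv : padicValNat p n = 1 := by
    have h1 := (padicValNat_dvd_iff_le (n := 1) hn).mp (by simpa using hpn)
    have h2 := (padicValNat_dvd_iff_le (n := 2) hn).not.mp hsq
    omega
  have := Nat.eq_sq_add_sq_iff.mp ⟨x, y, h⟩ p (Nat.mem_primeFactors.mpr ⟨hp, hpn, hn⟩) hp4
  rw [hv] at this
  exact Nat.not_even_one this

theorem stmt2 : natDensity {n : ℕ | ∃ x y : ℤ, x ^ 2 + y ^ 2 = (n : ℤ)} 0 := by
  refine natDensity_zero_of_forall_exists_mod_mem fun ε hε => ?_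
  obtain ⟨F, hF, hsum⟩ := exists_finset_primes_eq_mod_le_sum_inv (q := 4) (a := 3) (by decide)
    (-2 * Real.log ε + 1)
  have hF3 (p : ℕ) (hp : p ∈ F) : p.Prime ∧ p % 4 = 3 :=
    ⟨(hF p hp).1, (ZMod.natCast_eq_natCast_iff' p 3 4).mp (mod_cast (hF p hp).2)⟩
  refine ⟨∏ p ∈ F, p ^ 2,
    {r ∈ range (∏ p ∈ F, p ^ 2) | ∀ p ∈ F, ¬(p ∣ r % p ^ 2 ∧ ¬p ^ 2 ∣ r % p ^ 2)}, ?_, ?_⟩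
  · calc _ ≤ Real.exp (-(∑ p ∈ F, (p : ℝ)⁻¹) / 2) :=
          card_filter_forall_not_dvd_and_not_sq_dvd_div_le_exp F fun p hp => (hF3 p hp).1
      _ < ε := by rw [← Real.lt_log_iff_exp_lt hε]; linarith
  · rintro n ⟨x, y, hxy⟩
    have hn : n = x.natAbs ^ 2 + y.natAbs ^ 2 := by zify; simp [hxy]
    have hM : 0 < ∏ p ∈ F, p ^ 2 := prod_pos fun p hp => pow_pos (hF3 p hp).1.pos 2
    refine mem_filter.mpr ⟨mem_range.mpr (Nat.mod_lt _ hM), fun p hp => ?_⟩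
    rw [Nat.mod_mod_of_dvd _ (dvd_prod_of_mem _ hp), Nat.dvd_mod_iff (dvd_pow_self p two_ne_zero),
      Nat.dvd_mod_iff dvd_rfl]
    exact fun h => h.2 (Nat.sq_dvd_of_dvd_of_eq_sq_add_sq hn (hF3 p hp).1 (hF3 p hp).2 h.1)
end

section
/- The set of positive integers of the form 4^a(8b+7), with a, b nonnegative integers, has natural density 1/6. -/
/-!
Since `8b + 7` is not divisible by `4`, the exponent `a` of `n = 4^a (8b + 7)` is unique, so the
elements up to `N` are counted exponent by exponent: `∑_{4^a ≤ N} ⌊(⌊N/4^a⌋ + 1)/8⌋`. Each term is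
`N/(8·4^a)` up to an error of at most `1`, these main terms sum to `N/6` up to at most `1`, and the
`log₄ N + 2` errors are `O(√N) = o(N)`.
-/

open Filter

open Finset

theorem pow_mul_eq_pow_mul_of_not_dvd {k a c m m' : ℕ} (hk : k ≠ 0) (hm : ¬k ∣ m)
    (hm' : ¬k ∣ m') (h : k ^ a * m = k ^ c * m') : a = c ∧ m = m' := by
  wlog hac : a ≤ c generalizing a c m m'
  · exact (this hm' hm h.symm (by omega)).imp Eq.symm Eq.symm
  obtain ⟨d, rfl⟩ := Nat.exists_eq_add_of_le hac
  rw [pow_add, mul_assoc, Nat.mul_right_inj (pow_ne_zero a hk)] at h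
  rcases d with _ | d
  · simpa using h
  · exact absurd ⟨k ^ d * m', by rw [h, pow_succ]; ring⟩ hm

theorem mul_eight_mul_add_seven_le_iff {k N : ℕ} (hk : 0 < k) (b : ℕ) :
    k * (8 * b + 7) ≤ N ↔ b < (N / k + 1) / 8 := by
  rw [mul_comm, ← Nat.le_div_iff_mul_le hk]
  omega

theorem card_four_pow_mul_eight_mul_add_seven (N : ℕ) :
    Nat.card {n : ℕ // n ∈ {n : ℕ | ∃ a b : ℕ, n = 4 ^ a * (8 * b + 7)} ∧ 1 ≤ n ∧ n ≤ N} =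
      ∑ a ∈ range (Nat.log 4 N + 1), (N / 4 ^ a + 1) / 8 := by
  have hinj : Function.Injective (fun p : (_ : ℕ) × ℕ => 4 ^ p.1 * (8 * p.2 + 7)) := by
    rintro ⟨a, b⟩ ⟨c, d⟩ h
    dsimp only at h
    obtain ⟨rfl, h⟩ := pow_mul_eq_pow_mul_of_not_dvd (by norm_num) (by omega) (by omega) h
    rw [show b = d by omega]
  have hsum : ∑ a ∈ range (Nat.log 4 N + 1), (N / 4 ^ a + 1) / 8 =
      #((range (Nat.log 4 N + 1)).sigma fun a => range ((N / 4 ^ a + 1) / 8)) := by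
    simp only [card_sigma, card_range]
  rw [hsum, ← card_image_of_injective _ hinj, ← Nat.card_eq_finsetCard]
  refine Nat.card_congr (Equiv.subtypeEquivRight fun n => ?_)
  simp only [Set.mem_ofPred_eq, mem_image, mem_sigma, mem_range, Sigma.exists]
  constructor
  · rintro ⟨⟨a, b, rfl⟩, -, hle⟩
    have hpow : 4 ^ a ≤ N := le_trans (Nat.le_mul_of_pos_right _ (by omega)) hle
    exact ⟨a, b, ⟨Nat.lt_succ_of_le (Nat.le_log_of_pow_le (by norm_num) hpow),
      (mul_eight_mul_add_seven_le_iff (by positivity) b).1 hle⟩, rfl⟩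
  · rintro ⟨a, b, ⟨-, hb⟩, rfl⟩
    exact ⟨⟨a, b, rfl⟩, Nat.one_le_iff_ne_zero.2 (by positivity),
      (mul_eight_mul_add_seven_le_iff (by positivity) b).2 hb⟩

theorem abs_cast_div_add_one_div_eight_sub_le (N k : ℕ) :
    |(((N / k + 1) / 8 : ℕ) : ℝ) - N / (8 * k)| ≤ 1 := by
  have floor_bounds (m n : ℕ) : (m : ℝ) / n - 1 < (m / n : ℕ) ∧ ((m / n : ℕ) : ℝ) ≤ m / n :=
    ⟨Nat.floor_div_eq_div (K := ℝ) m n ▸ Nat.sub_one_lt_floor _, Nat.cast_div_le⟩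
  obtain ⟨hM₁, hM₂⟩ := floor_bounds N k
  obtain ⟨hc₁, hc₂⟩ := floor_bounds (N / k + 1) 8
  rw [mul_comm, ← div_div]
  push_cast at hc₁ hc₂
  rw [abs_le]
  constructor <;> linarith

theorem sum_range_div_eight_mul_four_pow (x : ℝ) (n : ℕ) :
    ∑ a ∈ range n, x / (8 * 4 ^ a) = x / 6 - x / (6 * 4 ^ n) := by
  induction n with
  | zero => ring
  | succ n ih =>
    rw [sum_range_succ, ih, pow_succ]
    field_simp
    ring

theorem abs_card_four_pow_mul_eight_mul_add_seven_sub_le (N : ℕ) :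
    |(Nat.card {n : ℕ // n ∈ {n : ℕ | ∃ a b : ℕ, n = 4 ^ a * (8 * b + 7)} ∧ 1 ≤ n ∧ n ≤ N} : ℝ)
      - N / 6| ≤ Nat.log 4 N + 2 := by
  set L := Nat.log 4 N
  have htail : |(N : ℝ) / (6 * 4 ^ (L + 1))| ≤ 1 := by
    have hN : (N : ℝ) < 4 ^ (L + 1) := by exact_mod_cast Nat.lt_pow_succ_log_self (by norm_num) N
    rw [abs_of_nonneg (by positivity), div_le_one (by positivity)]
    linarith
  have hterms : |∑ a ∈ range (L + 1), ((((N / 4 ^ a + 1) / 8 : ℕ) : ℝ) - N / (8 * 4 ^ a))|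
      ≤ L + 1 := by
    refine (abs_sum_le_sum_abs _ _).trans ((sum_le_card_nsmul _ _ 1 fun a _ => ?_).trans ?_)
    · exact_mod_cast abs_cast_div_add_one_div_eight_sub_le N (4 ^ a)
    · simp
  rw [card_four_pow_mul_eight_mul_add_seven, Nat.cast_sum]
  calc _ = |∑ a ∈ range (L + 1), ((((N / 4 ^ a + 1) / 8 : ℕ) : ℝ) - N / (8 * 4 ^ a))
        - N / (6 * 4 ^ (L + 1))| := by
          rw [sum_sub_distrib, sum_range_div_eight_mul_four_pow]; congr 1; ring
    _ ≤ (L + 1) + 1 := (abs_sub _ _).trans (add_le_add hterms htail)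
    _ = L + 2 := by ring

theorem log_four_add_one_le_sqrt {N : ℕ} (hN : N ≠ 0) : (Nat.log 4 N + 1 : ℝ) ≤ √N := by
  rw [Real.le_sqrt (by positivity) (by positivity)]
  have h : (Nat.log 4 N + 1) ^ 2 ≤ N :=
    calc (Nat.log 4 N + 1) ^ 2 ≤ (2 ^ Nat.log 4 N) ^ 2 := Nat.pow_le_pow_left Nat.lt_two_pow_self 2
      _ = 4 ^ Nat.log 4 N := by rw [← pow_mul, mul_comm, pow_mul]; norm_num
      _ ≤ N := Nat.pow_log_le_self 4 hN
  exact_mod_cast h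

theorem tendsto_div_of_abs_sub_mul_le_mul_sqrt {f : ℕ → ℝ} {δ C : ℝ}
    (h : ∀ᶠ N in atTop, |f N - δ * N| ≤ C * √N) : Tendsto (fun N => f N / N) atTop (nhds δ) := by
  rw [tendsto_iff_norm_sub_tendsto_zero]
  have hdecay : Tendsto (fun N : ℕ => C / √N) atTop (nhds 0) :=
    tendsto_const_nhds.div_atTop (Real.tendsto_sqrt_atTop.comp tendsto_natCast_atTop_atTop)
  refine squeeze_zero' (Eventually.of_forall fun _ => norm_nonneg _) ?_ hdecay
  filter_upwards [h, eventually_ne_atTop 0] with N hfN hN0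
  have hN : (0 : ℝ) < N := by positivity
  calc ‖f N / N - δ‖ = |f N - δ * N| / N := by
        rw [Real.norm_eq_abs, ← abs_of_pos hN, ← abs_div, abs_of_pos hN, sub_div,
          mul_div_cancel_right₀ _ hN.ne']
    _ ≤ C * √N / N := div_le_div_of_nonneg_right hfN hN.le
    _ = C / √N := by rw [mul_div_assoc, Real.sqrt_div_self', mul_one_div]

theorem stmt4 :
    natDensity {n : ℕ | ∃ a b : ℕ, n = 4 ^ a * (8 * b + 7)} (1 / 6) := by
  refine tendsto_div_of_abs_sub_mul_le_mul_sqrt (C := 2) ?_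
  filter_upwards [eventually_ne_atTop 0] with N hN
  rw [one_div_mul_eq_div]
  have hlog := log_four_add_one_le_sqrt hN
  exact (abs_card_four_pow_mul_eight_mul_add_seven_sub_le N).trans (by linarith)
end

section
/- Let {a_n} be a sequence of real numbers in (0,1] with a_n → 0 and ∑ a_n = ∞. Then for all real numbers 0 ≤ α < β ≤ 1, there exist a positive integer N and indices n_1, ..., n_N such that the product ∏_{i=1}^N (1 - a_{n_i}) lies strictly between α and β. -/
/-!
Drop finitely many terms so that every remaining factor satisfies `1 - a n > α / β`. The partial
products of the remaining factors start at `1 ≥ β` and tend to `0`, because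
`∏ (1 - a n) ≤ exp (-∑ a n)`. At the first partial product below `β` the previous one was at
least `β`, and the last factor is larger than `α / β`, so this product exceeds `α`.
-/

open Filter Finset

theorem exists_pos_mem_Ioo_of_first_lt {u : ℕ → ℝ} {α β : ℝ} (h0 : β ≤ u 0)
    (hlt : ∃ n, u n < β) (hstep : ∀ n, β ≤ u n → α < u (n + 1)) :
    ∃ n, 0 < n ∧ u n ∈ Set.Ioo α β := by
  classical
  obtain ⟨m, hm⟩ : ∃ m, Nat.find hlt = m + 1 :=
    Nat.exists_eq_succ_of_ne_zero fun h => (h ▸ Nat.find_spec hlt).not_ge h0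
  have hprev : β ≤ u m := not_lt.mp (Nat.find_min hlt (hm ▸ Nat.lt_succ_self m))
  exact ⟨m + 1, m.succ_pos, hstep m hprev, hm ▸ Nat.find_spec hlt⟩

theorem prod_range_one_sub_le_exp_neg_sum (a : ℕ → ℝ) (ha₁ : ∀ n, a n ≤ 1) (m : ℕ) :
    ∏ i ∈ range m, (1 - a i) ≤ Real.exp (-∑ i ∈ range m, a i) := by
  rw [← sum_neg_distrib, Real.exp_sum]
  exact prod_le_prod (fun i _ => sub_nonneg.mpr (ha₁ i)) fun i _ => Real.one_sub_le_exp_neg _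

theorem tendsto_prod_range_one_sub_of_not_summable {a : ℕ → ℝ} (ha₀ : ∀ n, 0 ≤ a n)
    (ha₁ : ∀ n, a n ≤ 1) (hdiv : ¬ Summable a) :
    Tendsto (fun m => ∏ i ∈ range m, (1 - a i)) atTop (nhds 0) := by
  have hsum : Tendsto (fun m => ∑ i ∈ range m, a i) atTop atTop :=
    (not_summable_iff_tendsto_nat_atTop_of_nonneg ha₀).mp hdiv
  exact tendsto_of_tendsto_of_tendsto_of_le_of_le tendsto_const_nhds
    (Real.tendsto_exp_neg_atTop_nhds_zero.comp hsum)
    (fun m => prod_nonneg fun i _ => sub_nonneg.mpr (ha₁ i))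
    (prod_range_one_sub_le_exp_neg_sum a ha₁)

theorem stmt9 (a : ℕ → ℝ) (ha : ∀ n, a n ∈ Set.Ioc (0 : ℝ) 1)
    (hlim : Tendsto a atTop (nhds 0)) (hdiv : ¬ Summable a)
    (α β : ℝ) (hα : 0 ≤ α) (hαβ : α < β) (hβ : β ≤ 1) :
    ∃ (N : ℕ) (_ : 0 < N) (idx : Fin N → ℕ),
      (∏ i : Fin N, (1 - a (idx i))) ∈ Set.Ioo α β := by
  have hβ₀ : 0 < β := hα.trans_lt hαβ
  obtain ⟨K, hK⟩ := eventually_atTop.mp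
    (hlim.eventually_lt_const (sub_pos.mpr ((div_lt_one hβ₀).mpr hαβ)))
  set b : ℕ → ℝ := fun i => a (K + i)
  have hb₁ : ∀ i, b i ≤ 1 := fun i => (ha _).2
  have hbdiv : ¬ Summable b := by
    simpa only [b, add_comm K, summable_nat_add_iff] using hdiv
  have hprod := tendsto_prod_range_one_sub_of_not_summable (fun i => (ha _).1.le) hb₁ hbdiv
  obtain ⟨N, hN, hmem⟩ := exists_pos_mem_Ioo_of_first_lt (u := fun m => ∏ i ∈ range m, (1 - b i))
    (α := α) (by simpa using hβ) (hprod.eventually_lt_const hβ₀).exists fun n hn => by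
      have hfac : α / β < 1 - b n := by linarith [hK (K + n) (Nat.le_add_right K n)]
      calc α = β * (α / β) := by field_simp
        _ < β * (1 - b n) := mul_lt_mul_of_pos_left hfac hβ₀
        _ ≤ (∏ i ∈ range n, (1 - b i)) * (1 - b n) :=
          mul_le_mul_of_nonneg_right hn (sub_nonneg.mpr (hb₁ n))
        _ = ∏ i ∈ range (n + 1), (1 - b i) := (prod_range_succ _ n).symm
  exact ⟨N, hN, fun i => K + i, by rwa [Fin.prod_univ_eq_prod_range (fun i => 1 - b i)]⟩
end

section
/- Let p be an odd prime, r a unit of ℤ_p reducing to a quadratic non-residue, and b, c positive integers. Then the equation x^2 - r·y^2 - p^{2c}·z^2 = u·p^{2c-1} has no solution in ℤ_p for any unit u ∈ {1, r}. -/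
/-!
Since `r` is a non-square mod `p`, the form `x² - r y²` is anisotropic mod `p`: if `p` divides a
value then `p` divides both `x` and `y`, so the value is divisible by `p²`. Iterating, a value
divisible by `p^(2k+1)` is divisible by `p^(2k+2)`. With `c = k + 1` the equation reads
`x² - r y² = p^(2k+1) (u + p z²)`, so `p ∣ u + p z²`, i.e. `p ∣ u`;
but `u ∈ {1, r}` is nonzero mod `p`, as `0` is a square.
-/

theorem PadicInt.toZMod_eq_zero_iff_dvd {p : ℕ} [Fact p.Prime] (x : ℤ_[p]) :
    PadicInt.toZMod x = 0 ↔ (p : ℤ_[p]) ∣ x := by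
  rw [← RingHom.mem_ker, PadicInt.ker_toZMod, PadicInt.maximalIdeal_eq_span_p,
    Ideal.mem_span_singleton]

theorem eq_zero_of_sq_eq_mul_sq {K : Type*} [Field K] {r x y : K} (hr : ¬ IsSquare r)
    (h : x ^ 2 = r * y ^ 2) : x = 0 ∧ y = 0 := by
  have hy : y = 0 := by
    by_contra hy
    exact hr ⟨x / y, by field_simp; linear_combination -h⟩
  exact ⟨pow_eq_zero_iff (two_ne_zero (α := ℕ)) |>.mp (by rw [h, hy]; ring), hy⟩

theorem PadicInt.dvd_of_dvd_sq_sub_mul_sq {p : ℕ} [Fact p.Prime] {r : ℤ_[p]}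
    (hr : ¬ IsSquare (PadicInt.toZMod r)) {x y : ℤ_[p]} (h : (p : ℤ_[p]) ∣ x ^ 2 - r * y ^ 2) :
    (p : ℤ_[p]) ∣ x ∧ (p : ℤ_[p]) ∣ y := by
  simp only [← PadicInt.toZMod_eq_zero_iff_dvd, map_sub, map_mul, map_pow, sub_eq_zero] at h ⊢
  exact eq_zero_of_sq_eq_mul_sq hr h

theorem pow_succ_dvd_of_pow_dvd_sq_sub_mul_sq {R : Type*} [CommRing R] [IsDomain R] {π r : R}
    (hπ : π ≠ 0) (haniso : ∀ x y : R, π ∣ x ^ 2 - r * y ^ 2 → π ∣ x ∧ π ∣ y) (k : ℕ) {x y : R}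
    (h : π ^ (2 * k + 1) ∣ x ^ 2 - r * y ^ 2) : π ^ (2 * k + 2) ∣ x ^ 2 - r * y ^ 2 := by
  obtain ⟨⟨x', rfl⟩, ⟨y', rfl⟩⟩ := haniso x y ((dvd_pow_self π (Nat.succ_ne_zero _)).trans h)
  have hq : (π * x') ^ 2 - r * (π * y') ^ 2 = π ^ 2 * (x' ^ 2 - r * y' ^ 2) := by ring
  rw [hq] at h ⊢
  rw [show 2 * k + 2 = 2 + 2 * k by omega, pow_add]
  refine mul_dvd_mul_left _ ?_
  cases k with
  | zero => simp
  | succ k =>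
    rw [show 2 * (k + 1) + 1 = 2 + (2 * k + 1) by omega, pow_add,
      mul_dvd_mul_iff_left (pow_ne_zero 2 hπ)] at h
    exact pow_succ_dvd_of_pow_dvd_sq_sub_mul_sq hπ haniso k h

theorem stmt14_general (p : ℕ) [Fact p.Prime] (c : ℕ) (hc : 1 ≤ c)
    (r : ℤ_[p]) (hns : ¬ IsSquare (PadicInt.toZMod r))
    (u : ℤ_[p]) (hu : u ∈ ({1, r} : Set ℤ_[p])) :
    ¬ ∃ x y z : ℤ_[p],
        x ^ 2 - r * y ^ 2 - (p : ℤ_[p]) ^ (2 * c) * z ^ 2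
          = u * (p : ℤ_[p]) ^ (2 * c - 1) := by
  rintro ⟨x, y, z, heq⟩
  obtain ⟨k, rfl⟩ : ∃ k, c = k + 1 := ⟨c - 1, by omega⟩
  have hp : (p : ℤ_[p]) ≠ 0 := Nat.cast_ne_zero.mpr (Fact.out : p.Prime).ne_zero
  have hval : x ^ 2 - r * y ^ 2 = (p : ℤ_[p]) ^ (2 * k + 1) * (u + p * z ^ 2) := by
    rw [show 2 * (k + 1) - 1 = 2 * k + 1 by omega] at heq
    linear_combination heq
  have hdvd := pow_succ_dvd_of_pow_dvd_sq_sub_mul_sq hp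
    (fun _ _ ↦ PadicInt.dvd_of_dvd_sq_sub_mul_sq hns) k (hval ▸ dvd_mul_right _ _)
  rw [hval, pow_succ, mul_dvd_mul_iff_left (pow_ne_zero _ hp), dvd_add_left (dvd_mul_right _ _),
    ← PadicInt.toZMod_eq_zero_iff_dvd] at hdvd
  rcases hu with rfl | rfl
  · simp at hdvd
  · exact hns (hdvd ▸ IsSquare.zero)

theorem stmt14 (p : ℕ) [Fact p.Prime] (hp : p ≠ 2) (b c : ℕ) (hb : 1 ≤ b) (hc : 1 ≤ c)
    (r : ℤ_[p]) (hr : IsUnit r) (hns : ¬ IsSquare (PadicInt.toZMod r))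
    (u : ℤ_[p]) (hu : u ∈ ({1, r} : Set ℤ_[p])) :
    ¬ ∃ x y z : ℤ_[p],
        x ^ 2 - r * y ^ 2 - (p : ℤ_[p]) ^ (2 * c) * z ^ 2
          = u * (p : ℤ_[p]) ^ (2 * c - 1) :=
  stmt14_general p c hc r hns u hu
end

section
/- Let K ⊆ ℚ ∩ [0,1] be a set that is compact as a subset of ℝ. Then K contains 0% of the rationals in [0,1] in the sense of height: the number of elements of K with reduced denominator at most N is o(N^2) as N → ∞. -/
/-!
A compact set of rationals is countable, hence Lebesgue-null, so the measure of its closed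
`r`-neighbourhood tends to `0` with `r`. Distinct rationals with denominators at most `N` are at
distance at least `1 / N ^ 2`, so the intervals of length `1 / N ^ 2` centred at the points of `K`
with denominator at most `N` are disjoint and lie in the `1 / (2 * N ^ 2)`-neighbourhood of `K`;
hence their number is at most `N ^ 2` times its measure.
-/

open Filter Topology MeasureTheory Metric
open scoped ENNReal

theorem Rat.inv_den_mul_den_le_abs_sub {a b : ℚ} (h : a ≠ b) :
    ((a.den : ℚ) * b.den)⁻¹ ≤ |a - b| := by
  have hden : (0 : ℚ) < a.den * b.den := by positivity
  have hnum : (a - b) * (a.den * b.den) = ((a.num * b.den - b.num * a.den : ℤ) : ℚ) := by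
    push_cast
    rw [← Rat.mul_den_eq_num a, ← Rat.mul_den_eq_num b]
    ring
  have hne : a.num * b.den - b.num * a.den ≠ 0 := by
    intro h0
    rw [h0, Int.cast_zero, mul_eq_zero, sub_eq_zero] at hnum
    exact hnum.elim h hden.ne'
  rw [inv_le_iff_one_le_mul₀' hden, mul_comm, ← abs_of_pos hden, ← abs_mul, hnum]
  exact_mod_cast Int.one_le_abs hne

theorem Rat.finite_setOf_mem_Icc_zero_one_den_le (N : ℕ) :
    {q : ℚ | q ∈ Set.Icc 0 1 ∧ q.den ≤ N}.Finite := by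
  refine Set.Finite.of_finite_image (f := fun q : ℚ => (q.num, q.den))
    ((Set.finite_Icc (0 : ℤ) N).prod (Set.finite_Iic N) |>.subset ?_)
    fun p _ q _ hpq => Rat.ext (Prod.ext_iff.1 hpq).1 (Prod.ext_iff.1 hpq).2
  rintro _ ⟨q, ⟨⟨hq0, hq1⟩, hqN⟩, rfl⟩
  have hnum_le : q.num ≤ q.den := by
    have : (q.num : ℚ) ≤ q.den := by
      rw [← Rat.mul_den_eq_num]
      exact mul_le_of_le_one_left (by positivity) hq1
    exact_mod_cast this
  exact ⟨⟨Rat.num_nonneg.2 hq0, hnum_le.trans (by exact_mod_cast hqN)⟩, hqN⟩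

theorem sum_measure_ball_le_measure_thickening {α : Type*} [PseudoMetricSpace α]
    [MeasurableSpace α] [OpensMeasurableSpace α] (μ : Measure α) {K : Set α} {s : Finset α}
    {r : ℝ} (hsK : ↑s ⊆ K) (hs : (s : Set α).Pairwise fun x y => 2 * r ≤ dist x y) :
    ∑ x ∈ s, μ (ball x r) ≤ μ (thickening r K) := by
  have hdisj : (s : Set α).PairwiseDisjoint fun x => ball x r :=
    fun x hx y hy hxy => ball_disjoint_ball (by linarith [hs hx hy hxy])
  rw [← measure_biUnion_finset hdisj fun _ _ => measurableSet_ball]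
  exact measure_mono <| Set.iUnion₂_subset fun x hx => ball_subset_thickening (hsK hx) r

theorem natCard_rat_den_le_div_sq_le_volume_cthickening {K : Set ℝ} (hK : IsCompact K)
    (hK01 : K ⊆ Set.Icc 0 1) (N : ℕ) :
    (Nat.card {q : ℚ // (q : ℝ) ∈ K ∧ q.den ≤ N} : ℝ) / (N : ℝ) ^ 2
      ≤ volume.real (cthickening (1 / (2 * (N : ℝ) ^ 2)) K) := by
  set r : ℝ := 1 / (2 * (N : ℝ) ^ 2)
  set S : Set ℚ := {q : ℚ | (q : ℝ) ∈ K ∧ q.den ≤ N}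
  have hS : S.Finite := (Rat.finite_setOf_mem_Icc_zero_one_den_le N).subset
    fun q hq => ⟨⟨by exact_mod_cast (hK01 hq.1).1, by exact_mod_cast (hK01 hq.1).2⟩, hq.2⟩
  set s : Finset ℝ := hS.toFinset.image (↑)
  have hcard : Nat.card S = s.card := by
    rw [Nat.card_eq_card_finite_toFinset hS, Finset.card_image_of_injective _ Rat.cast_injective]
  have hsep : (s : Set ℝ).Pairwise fun x y => 2 * r ≤ dist x y := by
    simp only [s, Finset.coe_image, Set.Finite.coe_toFinset]
    rintro _ ⟨p, ⟨-, hp⟩, rfl⟩ _ ⟨q, ⟨-, hq⟩, rfl⟩ hpq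
    have hpq' : p ≠ q := fun h => hpq (congrArg _ h)
    calc 2 * r = ((N : ℝ) * N)⁻¹ := by ring
      _ ≤ ((p.den : ℝ) * q.den)⁻¹ := by gcongr
      _ ≤ dist (p : ℝ) q := by
        simpa [Real.dist_eq] using (Rat.cast_le (K := ℝ)).2 (Rat.inv_den_mul_den_le_abs_sub hpq')
  have hpack : (s.card : ℝ≥0∞) * ENNReal.ofReal (2 * r) ≤ volume (cthickening r K) := by
    calc (s.card : ℝ≥0∞) * ENNReal.ofReal (2 * r) = ∑ x ∈ s, volume (ball x r) := by
          simp [Real.volume_ball]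
      _ ≤ volume (thickening r K) := by
          refine sum_measure_ball_le_measure_thickening volume ?_ hsep
          simpa [s] using Set.image_subset_iff.2 fun q (hq : q ∈ S) => hq.1
      _ ≤ volume (cthickening r K) := measure_mono (thickening_subset_cthickening r K)
  have hpack_real := ENNReal.toReal_mono (hK.cthickening.measure_lt_top).ne hpack
  rw [ENNReal.toReal_mul, ENNReal.toReal_ofReal (by positivity)] at hpack_real
  calc (Nat.card S : ℝ) / (N : ℝ) ^ 2 = s.card * (2 * r) := by rw [hcard]; ring
    _ ≤ volume.real (cthickening r K) := by simpa [Measure.real] using hpack_real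

theorem stmt18 (K : Set ℝ) (hK : IsCompact K)
    (hKQ : K ⊆ {x : ℝ | (∃ q : ℚ, (q : ℝ) = x)} ∩ Set.Icc 0 1) :
    Tendsto (fun N : ℕ =>
        (Nat.card {q : ℚ // (q : ℝ) ∈ K ∧ q.den ≤ N} : ℝ) / (N : ℝ) ^ 2)
      atTop (nhds 0) := by
  have hK0 : volume K = 0 :=
    ((Set.countable_range ((↑) : ℚ → ℝ)).mono fun x hx => (hKQ hx).1).measure_zero _
  have hr : Tendsto (fun N : ℕ => 1 / (2 * (N : ℝ) ^ 2)) atTop (𝓝 0) :=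
    tendsto_const_nhds.div_atTop <| (tendsto_pow_atTop two_ne_zero).comp
      tendsto_natCast_atTop_atTop |>.const_mul_atTop two_pos
  have hvol : Tendsto (fun N : ℕ => volume.real (cthickening (1 / (2 * (N : ℝ) ^ 2)) K))
      atTop (𝓝 0) := by
    have := (ENNReal.tendsto_toReal (hK0 ▸ ENNReal.zero_ne_top)).comp
      ((tendsto_measure_cthickening_of_isCompact hK (μ := volume)).comp hr)
    simpa [hK0, Function.comp_def, Measure.real] using this
  exact squeeze_zero (fun N => by positivity)
    (natCard_rat_den_le_div_sq_le_volume_cthickening hK fun x hx => (hKQ hx).2) hvol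
end
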